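/- arXiv:2511.20171 — 2 statements merged into one kernel-verified Lean document; each statement's English description precedes it below -/
import Mathlib

section
/- Let G be a finite nonabelian simple group, K a proper subgroup of maximal order, and χ a nonprincipal irreducible constituent of (1_K)^G. If χ = λ^G for a linear character λ of a subgroup K₁ ≤ G, then |K₁| > |K|; consequently K₁ = G and χ is linear, contradicting G = G'. Hence no nonprincipal irreducible constituent of (1_K)^G is monomial. -/
open scoped BigOperators Classical

/-- The character of a finite group induced from a function on a subgroup,
given by the usual induction formula. -/
noncomputable def indChar {G : Type} [Group G] (H : Subgroup G) (φ : H → ℂ) : G → ℂ :=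
  fun g => (Nat.card H : ℂ)⁻¹ *
    ∑ᶠ x : G, if h : x * g * x⁻¹ ∈ H then φ (⟨x * g * x⁻¹, h⟩ : H) else 0

/-- The permutation character `(1_M)^G`. -/
noncomputable def permChar {G : Type} [Group G] (M : Subgroup G) : G → ℂ :=
  indChar M (fun _ => 1)

/-- The usual inner product of class functions on a finite group. -/
noncomputable def charInner (G : Type) [Group G] (φ ψ : G → ℂ) : ℂ :=
  (Nat.card G : ℂ)⁻¹ * ∑ᶠ g : G, φ g * (starRingEnd ℂ) (ψ g)

/-- `χ` is an irreducible complex character of `G`. -/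
def IsIrrChar (G : Type) [Group G] (χ : G → ℂ) : Prop :=
  ∃ V : FDRep ℂ G, CategoryTheory.Simple V ∧ FDRep.character V = χ

/-- `χ` is an irreducible constituent of the (virtual) character `ψ`. -/
def IsConstituent (G : Type) [Group G] (χ ψ : G → ℂ) : Prop :=
  IsIrrChar G χ ∧ charInner G χ ψ ≠ 0

/-- A linear character of a subgroup: a multiplicative function to `ℂ` taking value `1` at `1`. -/
def IsLinearChar {G : Type} [Group G] (H : Subgroup G) (φ : H → ℂ) : Prop :=
  φ 1 = 1 ∧ ∀ a b : H, φ (a * b) = φ a * φ b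

/-- A character is monomial if it is induced from a linear character of a subgroup. -/
def IsMonomial (G : Type) [Group G] (χ : G → ℂ) : Prop :=
  ∃ (H : Subgroup G) (φ : H → ℂ), IsLinearChar H φ ∧ χ = indChar H φ

/-- The kernel of a character, as a set. -/
def charKer (G : Type) [Group G] (χ : G → ℂ) : Set G := {g | χ g = χ 1}

/-- `n` is a `π`-number: all its prime divisors lie in `π`. -/
def IsPiNumber (π : Set ℕ) (n : ℕ) : Prop := ∀ p : ℕ, p.Prime → p ∣ n → p ∈ π

/-- The largest normal `π'`-subgroup `O_{π'}(G)` (as the join of all normal `π'`-subgroups). -/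
def Opi' (π : Set ℕ) (G : Type) [Group G] : Subgroup G :=
  ⨆ N ∈ {N : Subgroup G | N.Normal ∧ IsPiNumber πᶜ (Nat.card N)}, N

/-- `G` is `π`-separable: it has a normal series whose factors are `π`-groups or `π'`-groups. -/
def IsPiSeparable (π : Set ℕ) (G : Type) [Group G] : Prop :=
  ∃ (n : ℕ) (H : Fin (n + 1) → Subgroup G),
    H 0 = ⊥ ∧ H (Fin.last n) = ⊤ ∧
    ∀ i : Fin n, H i.castSucc ≤ H i.succ ∧
      ((H i.castSucc).subgroupOf (H i.succ)).Normal ∧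
      (IsPiNumber π (Nat.card (H i.succ ⧸ (H i.castSucc).subgroupOf (H i.succ))) ∨
       IsPiNumber πᶜ (Nat.card (H i.succ ⧸ (H i.castSucc).subgroupOf (H i.succ))))

/-- `G` is `π`-solvable: it has a normal series whose factors are `π'`-groups or solvable. -/
def IsPiSolvable (π : Set ℕ) (G : Type) [Group G] : Prop :=
  ∃ (n : ℕ) (H : Fin (n + 1) → Subgroup G),
    H 0 = ⊥ ∧ H (Fin.last n) = ⊤ ∧
    ∀ i : Fin n, H i.castSucc ≤ H i.succ ∧
      ∃ hn : ((H i.castSucc).subgroupOf (H i.succ)).Normal,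
      (IsPiNumber πᶜ (Nat.card (H i.succ ⧸ (H i.castSucc).subgroupOf (H i.succ))) ∨
       (letI := hn; IsSolvable (H i.succ ⧸ (H i.castSucc).subgroupOf (H i.succ))))

/-- The inertia subgroup `I_G(λ)` of a character of a normal subgroup. -/
def inertia {G : Type} [Group G] (N : Subgroup G) (hN : N.Normal) (lam : N → ℂ) :
    Subgroup G where
  carrier := {g | ∀ n : N, lam ⟨g * n * g⁻¹, hN.conj_mem n n.2 g⟩ = lam n}
  one_mem' := by intro n; simp
  mul_mem' := by
    intro a b ha hb n
    have h1 := ha ⟨b * (n : G) * b⁻¹, hN.conj_mem n n.2 b⟩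
    have h2 := hb n
    have e : (a * b) * (n : G) * (a * b)⁻¹ = a * (b * (n : G) * b⁻¹) * a⁻¹ := by group
    calc lam ⟨(a * b) * (n : G) * (a * b)⁻¹, hN.conj_mem n n.2 (a * b)⟩
        = lam ⟨a * (b * (n : G) * b⁻¹) * a⁻¹, by
            rw [← e]; exact hN.conj_mem n n.2 (a * b)⟩ := by
          congr 1; exact Subtype.ext e
      _ = lam n := by rw [h1]; exact h2
  inv_mem' := by
    intro a ha n
    have h1 := ha ⟨a⁻¹ * (n : G) * a, by simpa using hN.conj_mem n n.2 a⁻¹⟩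
    have e : a * (a⁻¹ * (n : G) * a) * a⁻¹ = (n : G) := by group
    have : lam ⟨(n : G), by rw [← e]; exact hN.conj_mem _ (by simpa using hN.conj_mem n n.2 a⁻¹) a⟩
        = lam ⟨a⁻¹ * (n : G) * a, by simpa using hN.conj_mem n n.2 a⁻¹⟩ := by
      rw [← h1]; congr 1; exact Subtype.ext e.symm
    simpa using this.symm

/-- Conjugate of a character of a normal subgroup by a group element. -/
def conjChar {G : Type} [Group G] {N : Subgroup G} (hN : N.Normal) (g : G) (lam : N → ℂ) :
    N → ℂ :=
  fun n => lam ⟨g * (n : G) * g⁻¹, hN.conj_mem n n.2 g⟩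

/-! An irreducible constituent `χ` of `(1_K)^G` receives a nonzero `G`-map from the permutation
module `ℂ[G/K]`. The map is onto, and it either kills the invariant vector `∑ gK` or sends it to a
fixed vector spanning the target; as `|G:K| ≥ 2`, either way `χ(1) + 1 ≤ |G:K|`. If `χ = λ^G` with
`λ` linear on `K₁`, then `χ(1) = |G:K₁| < |G:K|`, so `|K₁| > |K|` and the maximality of `|K|`
forces `K₁ = G`. Then `χ = λ` is a homomorphism `G → ℂ`; its kernel is normal, hence trivial
(impossible, `G` being nonabelian) or everything (impossible, `χ` being nonprincipal). -/

open CategoryTheory Module MonoidAlgebra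

universe u

theorem Representation.ofMulAction_sum_single_one {k G X : Type*} [Semiring k] [Group G]
    [MulAction G X] [Fintype X] (g : G) :
    ofMulAction k G X g (∑ x : X, single x 1) = ∑ x : X, single x 1 := by
  simp only [map_sum, ofMulAction_single]
  exact Fintype.sum_equiv (MulAction.toPerm g) _ _ fun _ => rfl

theorem MonoidAlgebra.sum_single_one_ne_zero {k X : Type*} [Semiring k] [Nontrivial k]
    [Fintype X] [Nonempty X] : (∑ x : X, single x (1 : k)) ≠ 0 := by
  obtain ⟨x₀⟩ := ‹Nonempty X›
  intro h
  simpa [coeff_sum] using congrArg (fun c : k[X] => c.coeff x₀) h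

namespace FDRep

variable {k : Type u} [Field k]

section Monoid

variable {G : Type*} [Monoid G]

theorem toSubmodule_eq_top_of_ne_bot (V : FDRep k G) [Simple V] (p : Subrepresentation V.ρ)
    (hp : p.toSubmodule ≠ ⊥) : p.toSubmodule = ⊤ := by
  let ι : FDRep.of p.toRepresentation ⟶ V :=
    ⟨FGModuleCat.ofHom p.toSubmodule.subtype, fun _ => rfl⟩
  have : Mono ι := ⟨fun _ _ h => by ext z; exact congrArg (fun m => m.hom z) h⟩
  have hι : ι ≠ 0 := fun h => hp <| (Submodule.eq_bot_iff _).mpr fun v hv =>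
    congrArg (fun m => m.hom ⟨v, hv⟩) h
  have : IsIso ι := (Simple.mono_isIso_iff_nonzero ι).mpr hι
  rw [← p.toSubmodule.range_subtype]
  exact LinearMap.range_eq_top.mpr (isoToLinearEquiv (asIso ι)).surjective

theorem hom_comm_apply {V W : FDRep k G} (f : V ⟶ W) (g : G) (v : V) :
    f.hom.hom.hom (V.ρ g v) = W.ρ g (f.hom.hom.hom v) :=
  congrArg (fun m => m.hom.hom v) (f.comm g)

theorem range_eq_top_of_ne_zero {V W : FDRep k G} [Simple W] (f : V ⟶ W) (hf : f ≠ 0) :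
    LinearMap.range f.hom.hom.hom = ⊤ :=
  toSubmodule_eq_top_of_ne_bot W
    ⟨LinearMap.range f.hom.hom.hom, by rintro g _ ⟨v, rfl⟩; exact ⟨V.ρ g v, hom_comm_apply f g v⟩⟩
    fun h => hf <| by ext v; exact LinearMap.range_eq_bot.mp h ▸ rfl

theorem finrank_eq_one_of_fixed (V : FDRep k G) [Simple V] {v : V} (hv : v ≠ 0)
    (hfix : ∀ g, V.ρ g v = v) : finrank k V = 1 := by
  have hspan : k ∙ v = ⊤ := toSubmodule_eq_top_of_ne_bot V
    ⟨k ∙ v, fun g w hw => by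
      obtain ⟨a, rfl⟩ := Submodule.mem_span_singleton.mp hw
      rw [map_smul, hfix]
      exact Submodule.smul_mem _ a (Submodule.mem_span_singleton_self v)⟩
    (by simpa using hv)
  rw [← finrank_top, ← hspan, finrank_span_singleton hv]

end Monoid

variable {G : Type*} [Group G] {X : Type u} [MulAction G X]

theorem char_ofMulAction [Finite X] (g : G) :
    (FDRep.of (Representation.ofMulAction k G X)).character g =
      Nat.card (MulAction.fixedBy X g) := by
  have := Fintype.ofFinite X
  have hdiag (x : X) :
      (MonoidAlgebra.basis X k).repr (Representation.ofMulAction k G X g (single x 1)) x =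
        if g • x = x then 1 else 0 := by
    rw [Representation.ofMulAction_single, ← MonoidAlgebra.basis_apply, Module.Basis.repr_self,
      Finsupp.single_apply]
  rw [character, LinearMap.trace_eq_matrix_trace k (MonoidAlgebra.basis X k), Matrix.trace]
  simp only [Matrix.diag, LinearMap.toMatrix_apply, of_ρ', MonoidAlgebra.basis_apply, hdiag,
    Finset.sum_boole]
  rw [← Fintype.card_subtype, ← Nat.card_eq_fintype_card]
  rfl

theorem finrank_add_one_le_card [Finite X] (hX : 2 ≤ Nat.card X) (V : FDRep k G) [Simple V]
    (f : FDRep.of (Representation.ofMulAction k G X) ⟶ V) (hf : f ≠ 0) :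
    finrank k V + 1 ≤ Nat.card X := by
  have := Fintype.ofFinite X
  have : Nonempty X := (Nat.card_pos_iff.mp (by omega)).1
  set c : k[X] := ∑ x : X, single x 1
  have hdim : finrank k V + finrank k (LinearMap.ker f.hom.hom.hom) = Nat.card X := by
    rw [← finrank_top, ← range_eq_top_of_ne_zero f hf, LinearMap.finrank_range_add_finrank_ker,
      finrank_eq_card_basis (MonoidAlgebra.basis X k), Nat.card_eq_fintype_card]
  by_cases hc : f.hom.hom.hom c = 0
  · have : finrank k (LinearMap.ker f.hom.hom.hom) ≠ 0 :=
      Submodule.finrank_eq_zero.not.mpr <| (Submodule.ne_bot_iff _).mpr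
        ⟨c, hc, sum_single_one_ne_zero⟩
    omega
  · have := finrank_eq_one_of_fixed V hc fun g => by
      rw [← hom_comm_apply]; exact congrArg _ (Representation.ofMulAction_sum_single_one g)
    omega

end FDRep

section Induction

variable {G : Type} [Group G] [Finite G]

theorem indChar_apply_one (H : Subgroup G) {φ : H → ℂ} (hφ : φ 1 = 1) :
    indChar H φ 1 = H.index := by
  have := Fintype.ofFinite G
  have hterm (x : G) : (if h : x * 1 * x⁻¹ ∈ H then φ ⟨x * 1 * x⁻¹, h⟩ else 0) = 1 := by
    simp only [mul_one, mul_inv_cancel, one_mem, ↓reduceDIte]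
    exact hφ
  rw [indChar, finsum_eq_sum_of_fintype, Finset.sum_congr rfl fun x _ => hterm x,
    Finset.sum_const, Finset.card_univ, nsmul_eq_mul, ← Nat.card_eq_fintype_card, mul_one,
    ← H.card_mul_index, Nat.cast_mul, inv_mul_cancel_left₀ (Nat.cast_ne_zero.mpr Nat.card_pos.ne')]

theorem indChar_top_apply {φ : (⊤ : Subgroup G) → ℂ} (hφ : ∀ a b, φ (a * b * a⁻¹) = φ b)
    (g : G) : indChar ⊤ φ g = φ ⟨g, Subgroup.mem_top g⟩ := by
  have := Fintype.ofFinite G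
  have hterm (x : G) : (if h : x * g * x⁻¹ ∈ (⊤ : Subgroup G) then φ ⟨x * g * x⁻¹, h⟩ else 0) =
      φ ⟨g, Subgroup.mem_top g⟩ := by
    rw [dif_pos (Subgroup.mem_top _)]
    exact hφ ⟨x, Subgroup.mem_top x⟩ ⟨g, Subgroup.mem_top g⟩
  rw [indChar, finsum_eq_sum_of_fintype, Finset.sum_congr rfl fun x _ => hterm x,
    Finset.sum_const, Finset.card_univ, nsmul_eq_mul, ← Nat.card_eq_fintype_card,
    Subgroup.card_top, inv_mul_cancel_left₀ (Nat.cast_ne_zero.mpr Nat.card_pos.ne')]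

theorem permChar_apply (K : Subgroup G) (g : G) :
    permChar K g = Nat.card (MulAction.fixedBy (G ⧸ K) g) := by
  have := Fintype.ofFinite G
  have hconj : Nat.card {x : G // x * g * x⁻¹ ∈ K} =
      Nat.card K * Nat.card (MulAction.fixedBy (G ⧸ K) g) := by
    rw [← QuotientGroup.card_preimage_mk]
    refine Nat.card_congr (Equiv.subtypeEquiv (Equiv.inv G) fun x => ?_)
    simp only [Set.mem_preimage, MulAction.mem_fixedBy, Equiv.inv_apply,
      MulAction.Quotient.smul_mk, smul_eq_mul]
    rw [eq_comm, QuotientGroup.eq, inv_inv, mul_assoc]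
  rw [permChar, indChar, finsum_eq_sum_of_fintype]
  simp only [dite_eq_ite, Finset.sum_boole]
  rw [← Fintype.card_subtype, ← Nat.card_eq_fintype_card, hconj, Nat.cast_mul,
    inv_mul_cancel_left₀ (Nat.cast_ne_zero.mpr Nat.card_pos.ne')]

theorem charInner_permChar (K : Subgroup G) (V : FDRep ℂ G) :
    charInner G V.character (permChar K) =
      finrank ℂ (FDRep.of (Representation.ofMulAction ℂ G (G ⧸ K)) ⟶ V) := by
  have := Fintype.ofFinite G
  have : Invertible (Nat.card G : ℂ) := invertibleOfNonzero (Nat.cast_ne_zero.mpr Nat.card_pos.ne')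
  rw [← FDRep.scalar_product_char_eq_finrank_equivariant, charInner, finsum_eq_sum_of_fintype]
  congr 2 with g
  rw [permChar_apply, FDRep.char_ofMulAction, Complex.conj_natCast, MulAction.fixedBy_inv]

theorem finrank_add_one_le_index {K : Subgroup G} (hK : K ≠ ⊤) (V : FDRep ℂ G) [Simple V]
    (hV : charInner G V.character (permChar K) ≠ 0) : finrank ℂ V + 1 ≤ K.index := by
  rw [charInner_permChar, Nat.cast_ne_zero, ← Nat.pos_iff_ne_zero,
    finrank_pos_iff_exists_ne_zero] at hV
  obtain ⟨f, hf⟩ := hV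
  exact FDRep.finrank_add_one_le_card (K.one_lt_index_of_ne_top hK) V f hf

end Induction

theorem Subgroup.card_lt_card_of_index_lt {G : Type} [Group G] [Finite G] {H K : Subgroup G}
    (h : H.index < K.index) : Nat.card K < Nat.card H := by
  have hH := H.card_mul_index
  have hK := K.card_mul_index
  have : 0 < Nat.card H := Nat.card_pos
  nlinarith

def IsLinearChar.toMonoidHom {G : Type} [Group G] {H : Subgroup G} {φ : H → ℂ}
    (hφ : IsLinearChar H φ) : H →* ℂ where
  toFun := φ
  map_one' := hφ.1
  map_mul' := hφ.2

theorem IsLinearChar.apply_conj {G : Type} [Group G] {H : Subgroup G} {φ : H → ℂ}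
    (hφ : IsLinearChar H φ) (a b : H) : φ (a * b * a⁻¹) = φ b := by
  change hφ.toMonoidHom _ = hφ.toMonoidHom _
  rw [map_mul, map_mul, mul_right_comm, ← map_mul, mul_inv_cancel, map_one, one_mul]

theorem MonoidHom.eq_one_of_isSimpleGroup {G M : Type*} [Group G] [IsSimpleGroup G]
    [CommMonoid M] (hG : ¬ ∀ a b : G, a * b = b * a) (f : G →* M) : f = 1 := by
  rcases f.normal_ker.eq_bot_or_eq_top with h | h
  · exact absurd (fun a b => f.ker_eq_bot_iff.mp h (by rw [map_mul, map_mul, mul_comm])) hG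
  · ext g
    exact f.mem_ker.mp (h ▸ Subgroup.mem_top g)

/-- Let `G` be a finite nonabelian simple group, `K` a proper subgroup of maximal order, and
`χ` a nonprincipal irreducible constituent of `(1_K)^G`. If `χ = λ^G` for a linear character
`λ` of `K₁ ≤ G`, then `|K₁| > |K|`, `K₁ = G` and `χ` is linear; hence no nonprincipal
irreducible constituent of `(1_K)^G` is monomial. -/
theorem stmt11 {G : Type} [Group G] [Finite G] [IsSimpleGroup G]
    (hna : ¬ ∀ a b : G, a * b = b * a)
    (K : Subgroup G) (hK : K ≠ ⊤)
    (hmax : ∀ K' : Subgroup G, K' ≠ ⊤ → Nat.card K' ≤ Nat.card K)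
    (χ : G → ℂ) (hχ : IsConstituent G χ (permChar K)) (hnp : χ ≠ fun _ => 1) :
    (∀ (K₁ : Subgroup G) (lam : K₁ → ℂ), IsLinearChar K₁ lam → χ = indChar K₁ lam →
      Nat.card K < Nat.card K₁ ∧ K₁ = ⊤ ∧ χ 1 = 1) ∧
    ¬ IsMonomial G χ := by
  obtain ⟨⟨V, hV, rfl⟩, hinner⟩ := hχ
  have induced_eq_top (K₁ : Subgroup G) (lam : K₁ → ℂ) (hlam : IsLinearChar K₁ lam)
      (heq : V.character = indChar K₁ lam) :
      Nat.card K < Nat.card K₁ ∧ K₁ = ⊤ ∧ V.character 1 = 1 := by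
    have hidx : K₁.index = finrank ℂ V := by
      exact_mod_cast (indChar_apply_one K₁ hlam.1).symm.trans (heq ▸ FDRep.char_one V)
    have hcard : Nat.card K < Nat.card K₁ :=
      Subgroup.card_lt_card_of_index_lt (by have := finrank_add_one_le_index hK V hinner; omega)
    have htop : K₁ = ⊤ := by_contra fun h => (hmax K₁ h).not_gt hcard
    subst htop
    exact ⟨hcard, rfl, by rw [FDRep.char_one, ← hidx, Subgroup.index_top, Nat.cast_one]⟩
  refine ⟨induced_eq_top, ?_⟩
  rintro ⟨H, φ, hφ, heq⟩
  obtain ⟨-, rfl, -⟩ := induced_eq_top H φ hφ heq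
  refine hnp (funext fun g => ?_)
  rw [heq, indChar_top_apply hφ.apply_conj]
  exact DFunLike.congr_fun
    ((hφ.toMonoidHom.comp Subgroup.topEquiv.symm.toMonoidHom).eq_one_of_isSimpleGroup hna) g
end

section
/- Let G = SL(2,3). Then the irreducible characters of G of degree 2 are not constituents of (1_M)^G for any maximal subgroup M of G; i.e., they are not P-characters. -/
open scoped BigOperators Classical

/-!
Let `V` afford an irreducible character `χ` of degree 2 of `G = SL(2,3)`, and let `z = -1`.
The element `i = ⁅b, a⁆` of order 4 is a commutator, so `det ρ(i) = 1`, and by Cayley–Hamilton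
an involution of determinant 1 on a plane is `±1`. Applied to `z = i²` this gives `ρ(z) = ±1`.
If `ρ(z) = 1`, the same argument makes `ρ(i)` central, and since `i`, `j = a i a⁻¹` and `i j` are
conjugate, `ρ` kills `Q₈ = ⟨i, j⟩`; then `ρ` factors through the cyclic group `G / Q₈` and `V`
would be one-dimensional. Hence `ρ(z) = -1`, i.e. `χ(z g) = -χ(g)`.

A maximal subgroup `M` contains the central involution `z`: otherwise `M ⟨z⟩ = G`, so every
square lies in `M`, including `z = i²`. Finally `⟨χ, (1_M)^G⟩ = |M|⁻¹ ∑_{m ∈ M} χ(m)` by Frobenius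
reciprocity, and this sum vanishes because multiplication by `z ∈ M` negates its terms.
-/

open CategoryTheory Module
open scoped commutatorElement

theorem MonoidHom.map_commutatorElement_eq_one {G M : Type*} [Group G] [CommMonoid M]
    (f : G →* M) (g h : G) : f ⁅g, h⁆ = 1 := by
  rw [commutatorElement_def, map_mul, map_mul, map_mul, mul_right_comm (f g), mul_assoc,
    ← map_mul, ← map_mul, mul_inv_cancel, mul_inv_cancel, map_one, one_mul]

theorem Subgroup.sq_mem_of_isCoatom {G : Type*} [Group G] {M : Subgroup G} (hM : IsCoatom M)
    {w : G} (hw : w ∈ center G) (hw2 : w ^ 2 = 1) (hwM : w ∉ M) (g : G) : g ^ 2 ∈ M := by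
  have hcentral : zpowers w ≤ center G := zpowers_le.mpr hw
  have : (zpowers w).Normal :=
    ⟨fun n hn x => by rwa [mem_center_iff.mp (hcentral hn) x, mul_inv_cancel_right]⟩
  have htop : M ⊔ zpowers w = ⊤ :=
    hM.2 _ (lt_of_le_of_ne le_sup_left fun h => hwM (h ▸ mem_sup_right (mem_zpowers w)))
  obtain ⟨m, hm, _, ⟨k, rfl⟩, rfl⟩ := mem_sup_of_normal_right.mp (htop ▸ mem_top g)
  have hcomm : Commute m (w ^ k) := mem_center_iff.mp (hcentral ⟨k, rfl⟩) m
  have hwk : (w ^ k) ^ 2 = 1 := by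
    rw [← zpow_natCast, ← zpow_mul, mul_comm, zpow_mul, zpow_natCast, hw2, one_zpow]
  rw [hcomm.mul_pow, hwk, mul_one]
  exact M.pow_mem hm 2

namespace LinearMap

variable {K V : Type*} [Field K] [AddCommGroup V] [Module K V]

theorem sq_sub_trace_smul_add_det_smul_eq_zero (hV : finrank K V = 2) (f : Module.End K V) :
    f ^ 2 - trace K V f • f + LinearMap.det f • 1 = 0 := by
  have : Module.Finite K V := Module.finite_of_finrank_eq_succ hV
  let b := Module.finBasisOfFinrankEq K V hV
  have hf := aeval_self_charpoly f
  rw [← charpoly_toMatrix f b, Matrix.charpoly_fin_two, ← trace_eq_matrix_trace, det_toMatrix] at hf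
  simpa only [map_add, map_sub, map_pow, map_mul, Polynomial.aeval_X, Polynomial.aeval_C,
    Algebra.algebraMap_eq_smul_one, smul_mul_assoc, one_mul] using hf

theorem eq_one_or_eq_neg_one_of_sq_eq_one_of_det_eq_one (hV : finrank K V = 2) (h2 : (2 : K) ≠ 0)
    {f : Module.End K V} (hf : f ^ 2 = 1) (hdet : LinearMap.det f = 1) : f = 1 ∨ f = -1 := by
  have : Nontrivial V := Module.nontrivial_of_finrank_eq_succ hV
  have hCH := sq_sub_trace_smul_add_det_smul_eq_zero hV f
  rw [hf, hdet, one_smul] at hCH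
  have htf : trace K V f • f = (2 : K) • 1 := by
    rw [two_smul]; linear_combination (norm := module) -hCH
  have ht : trace K V f ≠ 0 := by
    rintro ht
    rw [ht, zero_smul, eq_comm, smul_eq_zero] at htf
    exact htf.elim h2 one_ne_zero
  set c := 2 / trace K V f
  have hfc : f = c • 1 := by
    rw [← inv_smul_smul₀ ht f, htf, smul_smul, inv_mul_eq_div]
  have hc : c ^ 2 = 1 := by
    rw [hfc, _root_.smul_pow, one_pow] at hf
    exact smul_left_injective K one_ne_zero (hf.trans (one_smul K 1).symm)
  rcases sq_eq_one_iff.mp hc with hc | hc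
  · left; rw [hfc, hc, one_smul]
  · right; rw [hfc, hc, neg_one_smul]

end LinearMap

theorem FDRep.exists_eq_smul_one_of_forall_commute {k G : Type} [Field k] [IsAlgClosed k]
    [Monoid G] (V : FDRep k G) [Simple V] {f : V →ₗ[k] V} (hf : ∀ g, Commute f (V.ρ g)) :
    ∃ c : k, f = c • 1 := by
  let φ : V ⟶ V := ⟨FGModuleCat.ofHom f, fun g => by
    ext x
    change f (V.ρ g x) = V.ρ g (f x)
    exact LinearMap.congr_fun (hf g) x⟩
  obtain ⟨c, hc⟩ := endomorphism_simple_eq_smul_id k φ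
  have h := congrArg (fun ψ : V ⟶ V => ψ.hom.hom.hom) hc
  exact ⟨c, h.symm⟩

theorem FDRep.finrank_eq_one_of_forall_commute {k G : Type} [Field k] [IsAlgClosed k] [CharZero k]
    [Group G] [Fintype G] (V : FDRep k G) [Simple V] (hV : ∀ g h, Commute (V.ρ g) (V.ρ h)) :
    finrank k V = 1 := by
  have hscalar g : ∃ c : k, V.ρ g = c • 1 := V.exists_eq_smul_one_of_forall_commute (hV g)
  have hterm g : V.character g * V.character g⁻¹ = finrank k V * finrank k V := by
    obtain ⟨c, hc⟩ := hscalar g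
    obtain ⟨c', hc'⟩ := hscalar g⁻¹
    have hd : (finrank k V : k) = c * c' * finrank k V := by
      calc (finrank k V : k) = V.character (g * g⁻¹) := by rw [mul_inv_cancel, FDRep.char_one]
        _ = c * c' * finrank k V := by
          rw [FDRep.character, map_mul, hc, hc', smul_mul_smul_comm, one_mul, map_smul,
            LinearMap.trace_one, smul_eq_mul]
    simp only [FDRep.character, hc, hc', map_smul, LinearMap.trace_one, smul_eq_mul]
    linear_combination -(finrank k V : k) * hd
  have h := FDRep.char_orthonormal V V
  rw [if_pos ⟨Iso.refl V⟩, Finset.sum_congr rfl fun g _ => hterm g, Finset.sum_const,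
    Finset.card_univ, nsmul_eq_mul, ← mul_assoc, Nat.card_eq_fintype_card,
    inv_mul_cancel₀ (Nat.cast_ne_zero.mpr Fintype.card_ne_zero), one_mul] at h
  exact Nat.eq_one_of_mul_eq_one_right (by exact_mod_cast h)

theorem permChar_apply_s15 {G : Type} [Group G] [Fintype G] (M : Subgroup G) (g : G) :
    permChar M g = (Nat.card M : ℂ)⁻¹ * ∑ x : G, if x * g * x⁻¹ ∈ M then 1 else 0 := by
  simp only [permChar, indChar, finsum_eq_sum_of_fintype, dite_eq_ite]

theorem sum_conj_mem_eq_sum_subgroup {G R : Type} [Group G] [Fintype G] [AddCommMonoid R]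
    (M : Subgroup G) (χ : G → R) (hχ : ∀ g h, χ (g * h) = χ (h * g)) (x : G) :
    ∑ g : G, (if x * g * x⁻¹ ∈ M then χ g else 0) = ∑ m : M, χ m := by
  calc ∑ g : G, (if x * g * x⁻¹ ∈ M then χ g else 0)
      = ∑ g : G, (if g ∈ M then χ (x⁻¹ * g * x) else 0) :=
        Fintype.sum_equiv (MulAut.conj x) _ _ fun g => by simp [mul_assoc]
    _ = ∑ g : G, (if g ∈ M then χ g else 0) := by
        refine Finset.sum_congr rfl fun g _ => ?_
        rw [hχ (x⁻¹ * g) x, mul_inv_cancel_left]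
    _ = ∑ m : M, χ m := by
        rw [← Finset.sum_filter]
        exact Finset.sum_subtype _ (by simp) _

theorem charInner_permChar_s15 {G : Type} [Group G] [Fintype G] (M : Subgroup G) (χ : G → ℂ)
    (hχ : ∀ g h, χ (g * h) = χ (h * g)) :
    charInner G χ (permChar M) = (Nat.card M : ℂ)⁻¹ * ∑ m : M, χ m := by
  have hreal g : starRingEnd ℂ (permChar M g) = permChar M g := by
    simp [permChar_apply_s15]
  have hsum : ∑ g : G, χ g * permChar M g
      = (Nat.card M : ℂ)⁻¹ * ∑ x : G, ∑ g : G, if x * g * x⁻¹ ∈ M then χ g else 0 := by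
    simp only [permChar_apply_s15, Finset.mul_sum, mul_ite, mul_one, mul_zero]
    rw [Finset.sum_comm]
    simp only [mul_comm (χ _)]
  simp only [charInner, finsum_eq_sum_of_fintype, hreal, hsum, sum_conj_mem_eq_sum_subgroup M χ hχ,
    Finset.sum_const, Finset.card_univ, nsmul_eq_mul, Nat.card_eq_fintype_card]
  field_simp

theorem Subgroup.sum_eq_zero_of_mul_eq_neg {G R : Type*} [Group G] [Ring R] [NoZeroDivisors R]
    [CharZero R] (M : Subgroup G) [Fintype M] (χ : G → R) {w : G} (hw : w ∈ M)
    (hχ : ∀ g, χ (w * g) = -χ g) : ∑ m : M, χ m = 0 := by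
  have h := Fintype.sum_equiv (Equiv.mulLeft (⟨w, hw⟩ : M)) (fun m => χ (w * m)) (fun m => χ m)
    fun _ => rfl
  simp only [hχ, Finset.sum_neg_distrib] at h
  exact CharZero.neg_eq_self_iff.mp h

abbrev SL23 := Matrix.SpecialLinearGroup (Fin 2) (ZMod 3)

namespace SL23

def a : SL23 := ⟨!![1, 1; 0, 1], by decide⟩
def b : SL23 := ⟨!![1, 0; 1, 1], by decide⟩
def i : SL23 := ⁅b, a⁆
def j : SL23 := a * i * a⁻¹
def z : SL23 := i ^ 2

theorem z_mem_center : z ∈ Subgroup.center SL23 :=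
  Subgroup.mem_center_iff.mpr (by decide +kernel)

theorem z_sq : z ^ 2 = 1 := by decide +kernel

theorem i_mul_j : i * j = b * i * b⁻¹ := by decide +kernel

theorem exists_eq_mul_pow (g : SL23) : ∃ p < 4, ∃ w < 2, ∃ m < 3, g = i ^ p * j ^ w * a ^ m := by
  revert g; decide +kernel

theorem commute_map_of_map_i_eq_one {M : Type*} [Monoid M] (f : SL23 →* M) (hi : f i = 1)
    (g h : SL23) : Commute (f g) (f h) := by
  have hj : f j = 1 := by rw [j, map_mul, map_mul, hi, mul_one, ← map_mul, mul_inv_cancel, map_one]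
  have hpow x : ∃ m : ℕ, f x = f a ^ m := by
    obtain ⟨p, -, w, -, m, -, rfl⟩ := exists_eq_mul_pow x
    exact ⟨m, by simp [hi, hj]⟩
  obtain ⟨m, hm⟩ := hpow g
  obtain ⟨n, hn⟩ := hpow h
  rw [hm, hn]
  exact Commute.pow_pow_self _ m n

theorem map_i_eq_one_of_map_z_eq_one {K V : Type*} [Field K] [AddCommGroup V] [Module K V]
    (ρ : Representation K SL23 V) (hV : finrank K V = 2) (h2 : (2 : K) ≠ 0) (hz : ρ z = 1) :
    ρ i = 1 := by
  have hdet : LinearMap.det (ρ i) = 1 := (LinearMap.det.comp ρ).map_commutatorElement_eq_one b a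
  have hsq : ρ i ^ 2 = 1 := by rw [← map_pow, ← hz]; rfl
  have hcentral x : ρ (x * i * x⁻¹) = ρ i := by
    have hcomm : Commute (ρ i) (ρ x) := by
      rcases LinearMap.eq_one_or_eq_neg_one_of_sq_eq_one_of_det_eq_one hV h2 hsq hdet with h | h <;>
        rw [h]
      exacts [Commute.one_left _, Commute.neg_one_left _]
    rw [map_mul, map_mul, ← hcomm.eq, mul_assoc, ← map_mul, mul_inv_cancel, map_one, mul_one]
  calc ρ i = ρ (b * i * b⁻¹) := (hcentral b).symm
    _ = ρ i * ρ (a * i * a⁻¹) := by rw [← i_mul_j, map_mul, j]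
    _ = ρ i ^ 2 := by rw [hcentral a, sq]
    _ = 1 := hsq

theorem ρ_z_eq_neg_one (V : FDRep ℂ SL23) [Simple V] (hV : finrank ℂ V = 2) : V.ρ z = -1 := by
  have hdet : LinearMap.det (V.ρ z) = 1 := by
    change (LinearMap.det.comp V.ρ) (i ^ 2) = 1
    rw [map_pow, i, MonoidHom.map_commutatorElement_eq_one, one_pow]
  have hsq : V.ρ z ^ 2 = 1 := by rw [← map_pow, z_sq, map_one]
  refine (LinearMap.eq_one_or_eq_neg_one_of_sq_eq_one_of_det_eq_one hV two_ne_zero hsq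
    hdet).resolve_left fun hz => ?_
  have := V.finrank_eq_one_of_forall_commute
    (commute_map_of_map_i_eq_one V.ρ (map_i_eq_one_of_map_z_eq_one V.ρ hV two_ne_zero hz))
  omega

theorem z_mem_of_isCoatom {M : Subgroup SL23} (hM : IsCoatom M) : z ∈ M := by
  by_contra h
  exact h (Subgroup.sq_mem_of_isCoatom hM z_mem_center z_sq h i)

end SL23

/-- In `G = SL(2,3)`, no irreducible character of degree `2` is a constituent of `(1_M)^G`
for any maximal subgroup `M` of `G`. -/
theorem stmt15 (χ : Matrix.SpecialLinearGroup (Fin 2) (ZMod 3) → ℂ)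
    (hχ : IsIrrChar (Matrix.SpecialLinearGroup (Fin 2) (ZMod 3)) χ) (hdeg : χ 1 = 2) :
    ∀ M : Subgroup (Matrix.SpecialLinearGroup (Fin 2) (ZMod 3)), IsCoatom M →
      charInner (Matrix.SpecialLinearGroup (Fin 2) (ZMod 3)) χ (permChar M) = 0 := by
  intro M hM
  obtain ⟨V, _, rfl⟩ := hχ
  have hV : finrank ℂ V = 2 := by exact_mod_cast (FDRep.char_one V).symm.trans hdeg
  have hz g : V.character (SL23.z * g) = -V.character g := by
    simp only [FDRep.character, map_mul, SL23.ρ_z_eq_neg_one V hV, neg_one_mul, map_neg]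
  rw [charInner_permChar_s15 M _ fun g h => FDRep.char_mul_comm V h g,
    M.sum_eq_zero_of_mul_eq_neg _ (SL23.z_mem_of_isCoatom hM) hz, mul_zero]
end
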